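/- Let G̃ : H_N ⊗ H_N → H_M ⊗ H_N and Ŵ on H_M ⊗ H_M be unitaries satisfying the mixed pentagon equation Ŵ₁₂ G̃₁₃ G̃₂₃ = G̃₂₃ G̃₁₂. Define Δ_P̂(x) := G̃*(1 ⊗ x)G̃ for x ∈ B(H_N) and Δ_N̂(y) := G̃*(1 ⊗ y)Ŵ for y ∈ B(H_M, H_N). Then the mixed coassociativity identities hold: (Δ_N̂ ⊗ ι)Δ_N̂ = (ι ⊗ Δ̂)Δ_N̂ on its domain and (Δ_P̂ ⊗ ι)Δ_P̂ = (ι ⊗ Δ_P̂)Δ_P̂, where Δ̂(m) = Ŵ*(1 ⊗ m)Ŵ; in particular Δ_P̂ is coassociative. -/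

import Mathlib

/-! The mixed pentagon equation `G̃₂₃ G̃₁₂ = Ŵ₁₂ G̃₁₃ G̃₂₃` identifies two inverses of the same
operator, giving `G̃*₁₂ G̃*₂₃ = G̃*₂₃ G̃*₁₃ Ŵ*₁₂`. For `Δ(z) = G̃*(1 ⊗ z)V` one side of
coassociativity is `G̃*₁₂ G̃*₂₃ z₃ V₂₃ V₁₂`; substituting that identity, moving `Ŵ*₁₂` past `z₃`
(they act on different legs) and using `V₂₃ V₁₂ = Ŵ₁₂ V₁₃ V₂₃`, which is the pentagon equation for
`V = Ŵ` and the mixed one for `V = G̃`, turns it into the other side `G̃*₂₃ G̃*₁₃ z₃ V₁₃ V₂₃`. -/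

open TensorProduct

noncomputable section

variable {A B C D : Type*}
  [AddCommGroup A] [Module ℂ A] [AddCommGroup B] [Module ℂ B]
  [AddCommGroup C] [Module ℂ C] [AddCommGroup D] [Module ℂ D]

/-- Place an operator `f : A ⊗ B → C ⊗ D` on legs 1 and 2, bystander `E` on leg 3. -/
def leg12 (f : A ⊗[ℂ] B →ₗ[ℂ] C ⊗[ℂ] D) (E : Type*) [AddCommGroup E] [Module ℂ E] :
    A ⊗[ℂ] (B ⊗[ℂ] E) →ₗ[ℂ] C ⊗[ℂ] (D ⊗[ℂ] E) :=
  (TensorProduct.assoc ℂ C D E).toLinearMap ∘ₗ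
    (TensorProduct.map f LinearMap.id) ∘ₗ (TensorProduct.assoc ℂ A B E).symm.toLinearMap

/-- Place an operator `f : A ⊗ B → C ⊗ D` on legs 1 and 3, bystander `E` on leg 2. -/
def leg13 (f : A ⊗[ℂ] B →ₗ[ℂ] C ⊗[ℂ] D) (E : Type*) [AddCommGroup E] [Module ℂ E] :
    A ⊗[ℂ] (E ⊗[ℂ] B) →ₗ[ℂ] C ⊗[ℂ] (E ⊗[ℂ] D) :=
  (LinearMap.lTensor C (TensorProduct.comm ℂ D E).toLinearMap) ∘ₗ
    leg12 f E ∘ₗ (LinearMap.lTensor A (TensorProduct.comm ℂ E B).toLinearMap)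

section Legs

variable {A' B' E F : Type*} [AddCommGroup A'] [Module ℂ A'] [AddCommGroup B'] [Module ℂ B']
  [AddCommGroup E] [Module ℂ E] [AddCommGroup F] [Module ℂ F]

@[simp]
theorem leg12_tmul (f : A ⊗[ℂ] B →ₗ[ℂ] C ⊗[ℂ] D) (a : A) (b : B) (e : E) :
    leg12 f E (a ⊗ₜ (b ⊗ₜ e)) = TensorProduct.assoc ℂ C D E (f (a ⊗ₜ b) ⊗ₜ e) := by
  simp [leg12]

theorem leg12_id : leg12 (LinearMap.id : A ⊗[ℂ] B →ₗ[ℂ] A ⊗[ℂ] B) E = LinearMap.id := by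
  ext a b e
  simp

theorem leg12_comp (f : C ⊗[ℂ] D →ₗ[ℂ] A' ⊗[ℂ] B') (g : A ⊗[ℂ] B →ₗ[ℂ] C ⊗[ℂ] D) :
    leg12 (f ∘ₗ g) E = leg12 f E ∘ₗ leg12 g E :=
  LinearMap.ext fun t => by simp [leg12, TensorProduct.map_map]

theorem leg12_apply_leg12 {f : C ⊗[ℂ] D →ₗ[ℂ] A ⊗[ℂ] B} {g : A ⊗[ℂ] B →ₗ[ℂ] C ⊗[ℂ] D}
    (h : f ∘ₗ g = LinearMap.id) (t : A ⊗[ℂ] (B ⊗[ℂ] E)) : leg12 f E (leg12 g E t) = t := by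
  rw [← LinearMap.comp_apply, ← leg12_comp, h, leg12_id, LinearMap.id_apply]

theorem leg12_comp_lTensor_lTensor (f : A ⊗[ℂ] B →ₗ[ℂ] C ⊗[ℂ] D) (y : E →ₗ[ℂ] F) :
    leg12 f F ∘ₗ LinearMap.lTensor A (LinearMap.lTensor B y)
      = LinearMap.lTensor C (LinearMap.lTensor D y) ∘ₗ leg12 f E := by
  ext a b e
  simp only [AlgebraTensorModule.curry_apply, curry_apply, LinearMap.coe_restrictScalars,
    LinearMap.comp_apply, LinearMap.lTensor_tmul, leg12_tmul]
  induction f (a ⊗ₜ b) using TensorProduct.induction_on <;> simp_all [add_tmul]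

theorem leg13_id : leg13 (LinearMap.id : A ⊗[ℂ] B →ₗ[ℂ] A ⊗[ℂ] B) E = LinearMap.id := by
  ext a e b
  simp [leg13]

theorem leg13_comp (f : C ⊗[ℂ] D →ₗ[ℂ] A' ⊗[ℂ] B') (g : A ⊗[ℂ] B →ₗ[ℂ] C ⊗[ℂ] D) :
    leg13 (f ∘ₗ g) E = leg13 f E ∘ₗ leg13 g E :=
  LinearMap.ext fun t => by simp [leg13, leg12_comp, ← LinearMap.lTensor_comp_apply]

theorem leg13_apply_leg13 {f : C ⊗[ℂ] D →ₗ[ℂ] A ⊗[ℂ] B} {g : A ⊗[ℂ] B →ₗ[ℂ] C ⊗[ℂ] D}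
    (h : f ∘ₗ g = LinearMap.id) (t : A ⊗[ℂ] (E ⊗[ℂ] B)) : leg13 f E (leg13 g E t) = t := by
  rw [← LinearMap.comp_apply, ← leg13_comp, h, leg13_id, LinearMap.id_apply]

theorem leg13_lTensor (y : B →ₗ[ℂ] B') :
    leg13 (LinearMap.lTensor A y) E = LinearMap.lTensor A (LinearMap.lTensor E y) := by
  ext a e b
  simp [leg13]

end Legs

theorem lTensor_apply_lTensor {R M N P : Type*} [CommSemiring R] [AddCommMonoid M] [Module R M]
    [AddCommMonoid N] [Module R N] [AddCommMonoid P] [Module R P]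
    {f : N →ₗ[R] P} {g : P →ₗ[R] N} (h : f ∘ₗ g = LinearMap.id) (t : M ⊗[R] P) :
    LinearMap.lTensor M f (LinearMap.lTensor M g t) = t := by
  rw [← LinearMap.lTensor_comp_apply, h, LinearMap.lTensor_id, LinearMap.id_apply]

section MixedPentagon

open LinearMap

variable {Hm Hn Y : Type*} [AddCommGroup Hm] [Module ℂ Hm] [AddCommGroup Hn] [Module ℂ Hn]
  [AddCommGroup Y] [Module ℂ Y]
  {What Whatstar : Hm ⊗[ℂ] Hm →ₗ[ℂ] Hm ⊗[ℂ] Hm}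
  {G : Hn ⊗[ℂ] Hn →ₗ[ℂ] Hm ⊗[ℂ] Hn} {Gstar : Hm ⊗[ℂ] Hn →ₗ[ℂ] Hn ⊗[ℂ] Hn}

theorem mixed_pentagon_inv (hW2 : Whatstar ∘ₗ What = LinearMap.id)
    (hG1 : G ∘ₗ Gstar = LinearMap.id) (hG2 : Gstar ∘ₗ G = LinearMap.id)
    (hmixedpent : leg12 What Hn ∘ₗ leg13 G Hm ∘ₗ lTensor Hn G = lTensor Hm G ∘ₗ leg12 G Hn) :
    leg12 Gstar Hn ∘ₗ lTensor Hm Gstar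
      = lTensor Hn Gstar ∘ₗ leg13 Gstar Hm ∘ₗ leg12 Whatstar Hn := by
  have right_inv : Function.RightInverse (leg12 Gstar Hn ∘ₗ lTensor Hm Gstar)
      (lTensor Hm G ∘ₗ leg12 G Hn) := fun t => by
    simp only [comp_apply, leg12_apply_leg12 hG1, lTensor_apply_lTensor hG1]
  have left_inv : Function.LeftInverse (lTensor Hn Gstar ∘ₗ leg13 Gstar Hm ∘ₗ leg12 Whatstar Hn)
      (lTensor Hm G ∘ₗ leg12 G Hn) := fun t => by
    simp only [← hmixedpent, comp_apply, leg12_apply_leg12 hW2, leg13_apply_leg13 hG2,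
      lTensor_apply_lTensor hG2]
  exact coe_injective (left_inv.eq_rightInverse right_inv).symm

theorem coassoc_of_mixed_pentagon (hW2 : Whatstar ∘ₗ What = LinearMap.id)
    (hinv : leg12 Gstar Hn ∘ₗ lTensor Hm Gstar
      = lTensor Hn Gstar ∘ₗ leg13 Gstar Hm ∘ₗ leg12 Whatstar Hn)
    {V : Y ⊗[ℂ] Y →ₗ[ℂ] Hm ⊗[ℂ] Y}
    (hV : leg12 What Y ∘ₗ leg13 V Hm ∘ₗ lTensor Y V = lTensor Hm V ∘ₗ leg12 V Y)
    (z : Y →ₗ[ℂ] Hn) :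
    leg12 Gstar Hn ∘ₗ lTensor Hm (Gstar ∘ₗ lTensor Hm z ∘ₗ V) ∘ₗ leg12 V Y
      = lTensor Hn Gstar ∘ₗ leg13 (Gstar ∘ₗ lTensor Hm z ∘ₗ V) Hm ∘ₗ lTensor Y V :=
  calc _ = (leg12 Gstar Hn ∘ₗ lTensor Hm Gstar) ∘ₗ lTensor Hm (lTensor Hm z)
        ∘ₗ (lTensor Hm V ∘ₗ leg12 V Y) := by simp only [lTensor_comp, comp_assoc]
    _ = lTensor Hn Gstar ∘ₗ leg13 Gstar Hm ∘ₗ lTensor Hm (lTensor Hm z)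
        ∘ₗ (leg12 Whatstar Y ∘ₗ leg12 What Y) ∘ₗ leg13 V Hm ∘ₗ lTensor Y V := by
      rw [hinv, ← hV]
      simp only [comp_assoc]
      rw [← comp_assoc _ (lTensor Hm (lTensor Hm z)) (leg12 Whatstar Hn),
        leg12_comp_lTensor_lTensor]
      simp only [comp_assoc]
    _ = _ := by
      rw [← leg12_comp, hW2, leg12_id]
      simp only [leg13_comp, leg13_lTensor, id_comp, comp_assoc]

end MixedPentagon

theorem mixed_coassociativity_general {Hm Hn : Type*}
    [AddCommGroup Hm] [Module ℂ Hm] [AddCommGroup Hn] [Module ℂ Hn]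
    (What Whatstar : Hm ⊗[ℂ] Hm →ₗ[ℂ] Hm ⊗[ℂ] Hm)
    (hW2 : Whatstar ∘ₗ What = LinearMap.id)
    (hWpent : leg12 What Hm ∘ₗ leg13 What Hm ∘ₗ LinearMap.lTensor Hm What
      = LinearMap.lTensor Hm What ∘ₗ leg12 What Hm)
    (G : Hn ⊗[ℂ] Hn →ₗ[ℂ] Hm ⊗[ℂ] Hn) (Gstar : Hm ⊗[ℂ] Hn →ₗ[ℂ] Hn ⊗[ℂ] Hn)
    (hG1 : G ∘ₗ Gstar = LinearMap.id) (hG2 : Gstar ∘ₗ G = LinearMap.id)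
    (hmixedpent : leg12 What Hn ∘ₗ leg13 G Hm ∘ₗ LinearMap.lTensor Hn G
      = LinearMap.lTensor Hm G ∘ₗ leg12 G Hn)
    (ΔN : (Hm →ₗ[ℂ] Hn) → (Hm ⊗[ℂ] Hm →ₗ[ℂ] Hn ⊗[ℂ] Hn))
    (hΔN : ∀ y : Hm →ₗ[ℂ] Hn, ΔN y = Gstar ∘ₗ LinearMap.lTensor Hm y ∘ₗ What)
    (ΔP : (Hn →ₗ[ℂ] Hn) → (Hn ⊗[ℂ] Hn →ₗ[ℂ] Hn ⊗[ℂ] Hn))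
    (hΔP : ∀ x : Hn →ₗ[ℂ] Hn, ΔP x = Gstar ∘ₗ LinearMap.lTensor Hm x ∘ₗ G) :
    -- coassociativity for the corner `Δ_N̂`:
    (∀ y : Hm →ₗ[ℂ] Hn,
      leg12 Gstar Hn ∘ₗ LinearMap.lTensor Hm (ΔN y) ∘ₗ leg12 What Hm
        = LinearMap.lTensor Hn Gstar ∘ₗ leg13 (ΔN y) Hm ∘ₗ LinearMap.lTensor Hm What)
    -- coassociativity for `Δ_P̂`:
    ∧ (∀ x : Hn →ₗ[ℂ] Hn,
      leg12 Gstar Hn ∘ₗ LinearMap.lTensor Hm (ΔP x) ∘ₗ leg12 G Hn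
        = LinearMap.lTensor Hn Gstar ∘ₗ leg13 (ΔP x) Hm ∘ₗ LinearMap.lTensor Hn G) := by
  have hinv := mixed_pentagon_inv hW2 hG1 hG2 hmixedpent
  refine ⟨fun y => ?_, fun x => ?_⟩
  · rw [hΔN]
    exact coassoc_of_mixed_pentagon hW2 hinv hWpent y
  · rw [hΔP]
    exact coassoc_of_mixed_pentagon hW2 hinv hmixedpent x

/-- Let `G̃ : H_N ⊗ H_N → H_M ⊗ H_N` and `Ŵ` (on `H_M ⊗ H_M`) be
unitaries with `Ŵ` satisfying the pentagon equation and `G̃` the mixed pentagon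
equation `Ŵ₁₂ G̃₁₃ G̃₂₃ = G̃₂₃ G̃₁₂`.  With `Δ_P̂(x) := G̃*(1 ⊗ x)G̃` and
`Δ_N̂(y) := G̃*(1 ⊗ y)Ŵ`, the mixed coassociativity identities hold
(applying the coproduct to either leg of `Δ_N̂(y)` resp. `Δ_P̂(x)` yields the same
operator); in particular `Δ_P̂` is coassociative. -/
theorem mixed_coassociativity {Hm Hn : Type*}
    [AddCommGroup Hm] [Module ℂ Hm] [AddCommGroup Hn] [Module ℂ Hn]
    (What Whatstar : Hm ⊗[ℂ] Hm →ₗ[ℂ] Hm ⊗[ℂ] Hm)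
    (hW1 : What ∘ₗ Whatstar = LinearMap.id) (hW2 : Whatstar ∘ₗ What = LinearMap.id)
    (hWpent : leg12 What Hm ∘ₗ leg13 What Hm ∘ₗ LinearMap.lTensor Hm What
      = LinearMap.lTensor Hm What ∘ₗ leg12 What Hm)
    (G : Hn ⊗[ℂ] Hn →ₗ[ℂ] Hm ⊗[ℂ] Hn) (Gstar : Hm ⊗[ℂ] Hn →ₗ[ℂ] Hn ⊗[ℂ] Hn)
    (hG1 : G ∘ₗ Gstar = LinearMap.id) (hG2 : Gstar ∘ₗ G = LinearMap.id)
    (hmixedpent : leg12 What Hn ∘ₗ leg13 G Hm ∘ₗ LinearMap.lTensor Hn G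
      = LinearMap.lTensor Hm G ∘ₗ leg12 G Hn)
    (ΔN : (Hm →ₗ[ℂ] Hn) → (Hm ⊗[ℂ] Hm →ₗ[ℂ] Hn ⊗[ℂ] Hn))
    (hΔN : ∀ y : Hm →ₗ[ℂ] Hn, ΔN y = Gstar ∘ₗ LinearMap.lTensor Hm y ∘ₗ What)
    (ΔP : (Hn →ₗ[ℂ] Hn) → (Hn ⊗[ℂ] Hn →ₗ[ℂ] Hn ⊗[ℂ] Hn))
    (hΔP : ∀ x : Hn →ₗ[ℂ] Hn, ΔP x = Gstar ∘ₗ LinearMap.lTensor Hm x ∘ₗ G) :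
    -- coassociativity for the corner `Δ_N̂`:
    (∀ y : Hm →ₗ[ℂ] Hn,
      leg12 Gstar Hn ∘ₗ LinearMap.lTensor Hm (ΔN y) ∘ₗ leg12 What Hm
        = LinearMap.lTensor Hn Gstar ∘ₗ leg13 (ΔN y) Hm ∘ₗ LinearMap.lTensor Hm What)
    -- coassociativity for `Δ_P̂`:
    ∧ (∀ x : Hn →ₗ[ℂ] Hn,
      leg12 Gstar Hn ∘ₗ LinearMap.lTensor Hm (ΔP x) ∘ₗ leg12 G Hn
        = LinearMap.lTensor Hn Gstar ∘ₗ leg13 (ΔP x) Hm ∘ₗ LinearMap.lTensor Hn G) :=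
  mixed_coassociativity_general What Whatstar hW2 hWpent G Gstar hG1 hG2 hmixedpent ΔN hΔN ΔP hΔP

end
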